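/- arXiv:2506.20218 — 2 statements merged into one kernel-verified Lean document; each statement's English description precedes it below -/
import Mathlib

section
/- There exists a constant C1 > 0 such that for every integer m ≥ 1, every real q with 1/2 < q < 1, Y1 ~ Binomial(m, q), Y2 = m − Y1, and every integer x with m/2 ≤ x < m: Pr(Y1 > Y2 | max(Y1, Y2) > x) − Pr(Y2 > Y1 | max(Y1, Y2) > x) ≥ C1 · min(√m · (2q − 1), 1). -/
open scoped BigOperators

noncomputable section

/-- `binomPr m q S` is the probability that a `Binomial(m, q)` random variable
takes a value in the set `S`. -/
def binomPr (m : ℕ) (q : ℝ) (S : Set ℕ) : ℝ :=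
  ∑ i ∈ Finset.range (m + 1),
    S.indicator (fun i => (m.choose i : ℝ) * q ^ i * (1 - q) ^ (m - i)) i

/-!
Write `w i = C(m, i) q^i (1 - q)^(m - i)` and `ρ = (1 - q) / q ≤ 1`. Since `m ≤ 2x`, the two
conditioned events are `{Y1 > x}` and its reflection `{m - Y1 > x}`, and
`w (m - i) = w i ρ^(2i - m)`.
So the bias is `∑_{i > x} w i (1 - ρ^(2i - m)) / ∑_{i > x} w i (1 + ρ^(2i - m))`, which for any
`s > x` is at least `(1 - ρ^(2s - m)) Pr(Y1 ≥ s) / (2 Pr(Y1 > x))`.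

Take `s = max (x + 1) (⌈m/2⌉ + k)` with `k = ⌊√m⌋ / 4`, so that `2s - m ≥ √m / 4`. Either
`s = x + 1`, or `Pr(Y1 ≥ ⌈m/2⌉ + k) ≥ 1/6`: reflection gives `Pr(Y1 ≥ ⌈m/2⌉) ≥ 1/2`, and on
`[⌈m/2⌉, ⌈m/2⌉ + 2k)` consecutive weights shrink by a factor at most `1 - 8k/m`, so shifting by `k`
loses at most a factor `(1 - 8k/m)^k ≥ 1/2` (Bernoulli). Finally, Bernoulli again gives
`ρ^t ≤ (1 + t (2q - 1))⁻¹` for `t = 2s - m`.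
-/

open Finset

def binomWeight (m : ℕ) (q : ℝ) (i : ℕ) : ℝ := (m.choose i : ℝ) * q ^ i * (1 - q) ^ (m - i)

section

variable {m : ℕ} {q : ℝ}

lemma binomWeight_nonneg (hq : 0 ≤ q) (hq1 : q ≤ 1) (i : ℕ) : 0 ≤ binomWeight m q i := by
  have : 0 ≤ 1 - q := by linarith
  unfold binomWeight; positivity

lemma binomWeight_self (m : ℕ) (q : ℝ) : binomWeight m q m = q ^ m := by
  simp [binomWeight]

lemma sum_binomWeight (m : ℕ) (q : ℝ) : ∑ i ∈ range (m + 1), binomWeight m q i = 1 := by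
  calc ∑ i ∈ range (m + 1), binomWeight m q i = (q + (1 - q)) ^ m := by
        rw [add_pow]; exact sum_congr rfl fun i _ => by unfold binomWeight; ring
    _ = 1 := by rw [add_sub_cancel, one_pow]

lemma binomPr_eq_sum {S : Set ℕ} {T : Finset ℕ} (hT : T ⊆ range (m + 1))
    (hST : ∀ i ≤ m, i ∈ S ↔ i ∈ T) : binomPr m q S = ∑ i ∈ T, binomWeight m q i := by
  classical
  rw [← sum_indicator_subset _ hT, binomPr]
  refine sum_congr rfl fun i hi => ?_
  simp only [Set.indicator_apply, mem_coe, hST i (Nat.lt_succ_iff.1 (mem_range.1 hi))]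
  rfl

lemma binomPr_union {S T : Set ℕ} (h : Disjoint S T) :
    binomPr m q (S ∪ T) = binomPr m q S + binomPr m q T := by
  simp only [binomPr, Set.indicator_union_of_disjoint h, sum_add_distrib]

lemma binomWeight_sub_eq (hq : q ≠ 0) {i : ℕ} (hi : i ≤ m) (hmi : m ≤ 2 * i) :
    binomWeight m q (m - i) = binomWeight m q i * ((1 - q) / q) ^ (2 * i - m) := by
  have hsplit (a : ℝ) : a ^ i = a ^ (m - i) * a ^ (2 * i - m) := by
    rw [← pow_add]; congr 1; omega
  unfold binomWeight
  rw [Nat.choose_symm hi, Nat.sub_sub_self hi, div_pow, hsplit q, hsplit (1 - q)]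
  field_simp

lemma binomWeight_sub_le (hq : 1 / 2 ≤ q) (hq1 : q ≤ 1) {i : ℕ} (hi : i ≤ m) (hmi : m ≤ 2 * i) :
    binomWeight m q (m - i) ≤ binomWeight m q i := by
  rw [binomWeight_sub_eq (by positivity) hi hmi]
  refine mul_le_of_le_one_right (binomWeight_nonneg (by linarith) hq1 i) (pow_le_one₀ ?_ ?_)
  · exact div_nonneg (by linarith) (by linarith)
  · rw [div_le_one (by linarith)]; linarith

lemma half_le_sum_binomWeight_Ico (hq : 1 / 2 ≤ q) (hq1 : q ≤ 1) :
    1 / 2 ≤ ∑ i ∈ Ico (m - m / 2) (m + 1), binomWeight m q i := by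
  have hnonneg := binomWeight_nonneg (m := m) (by linarith) hq1
  have htotal : ∑ i ∈ range (m - m / 2), binomWeight m q i
      + ∑ i ∈ Ico (m - m / 2) (m + 1), binomWeight m q i = 1 := by
    rw [sum_range_add_sum_Ico _ (by omega), sum_binomWeight]
  have hlower : ∑ i ∈ range (m - m / 2), binomWeight m q i
      ≤ ∑ i ∈ Ico (m - m / 2) (m + 1), binomWeight m q i := by
    calc ∑ i ∈ range (m - m / 2), binomWeight m q i
        ≤ ∑ i ∈ Ico 0 (m - m / 2), binomWeight m q (m - i) := by
          rw [Nat.Ico_zero_eq_range]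
          refine sum_le_sum fun i hi => ?_
          have hi : 2 * i < m := by rw [mem_range] at hi; omega
          have h := binomWeight_sub_le hq hq1 (i := m - i) (m.sub_le i) (by omega)
          rwa [Nat.sub_sub_self (by omega)] at h
      _ = ∑ i ∈ Ico (m / 2 + 1) (m + 1), binomWeight m q i := by
          rw [sum_Ico_reflect _ _ (by omega)]; congr 2; omega
      _ ≤ ∑ i ∈ Ico (m - m / 2) (m + 1), binomWeight m q i :=
          sum_le_sum_of_subset_of_nonneg (Ico_subset_Ico (by omega) le_rfl)
            fun i _ _ => hnonneg i
  linarith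

lemma succ_mul_binomWeight_succ {i : ℕ} (hi : i < m) :
    (i + 1) * binomWeight m q (i + 1) * (1 - q) = (m - i) * binomWeight m q i * q := by
  have hchoose := congrArg (Nat.cast : ℕ → ℝ) (Nat.choose_succ_right_eq m i)
  push_cast [Nat.cast_sub hi.le] at hchoose
  unfold binomWeight
  rw [show m - i = m - (i + 1) + 1 by omega]
  linear_combination (q ^ (i + 1) * (1 - q) * (1 - q) ^ (m - (i + 1))) * hchoose

lemma one_sub_mul_binomWeight_le_succ (hq : 1 / 2 ≤ q) (hq1 : q < 1) {δ : ℝ} {i : ℕ}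
    (hi : i < m) (hδ : (1 - δ) * (i + 1) ≤ m - i) :
    (1 - δ) * binomWeight m q i ≤ binomWeight m q (i + 1) := by
  have hw := binomWeight_nonneg (m := m) (by linarith) hq1.le i
  have hmi : (0 : ℝ) ≤ m - i := by
    have : (i : ℝ) ≤ m := by exact_mod_cast hi.le
    linarith
  have hratio : (m - i) * binomWeight m q i ≤ (i + 1) * binomWeight m q (i + 1) := by
    refine le_of_mul_le_mul_right ?_ (sub_pos.2 hq1)
    rw [succ_mul_binomWeight_succ hi]
    exact mul_le_mul_of_nonneg_left (by linarith) (mul_nonneg hmi hw)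
  refine le_of_mul_le_mul_left ?_ (by positivity : (0 : ℝ) < i + 1)
  nlinarith

lemma pow_mul_binomWeight_le_add (hq : 1 / 2 ≤ q) (hq1 : q < 1) {δ : ℝ} (hδ : δ ≤ 1) {i : ℕ} :
    ∀ k : ℕ, (∀ j, i ≤ j → j < i + k → j < m ∧ (1 - δ) * (j + 1) ≤ m - j) →
      (1 - δ) ^ k * binomWeight m q i ≤ binomWeight m q (i + k)
  | 0, _ => by simp
  | k + 1, h => by
    obtain ⟨hj, hδj⟩ := h (i + k) (by omega) (by omega)
    calc (1 - δ) ^ (k + 1) * binomWeight m q i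
        = (1 - δ) * ((1 - δ) ^ k * binomWeight m q i) := by ring
      _ ≤ (1 - δ) * binomWeight m q (i + k) :=
          mul_le_mul_of_nonneg_left
            (pow_mul_binomWeight_le_add hq hq1 hδ k fun j hij hjk => h j hij (by omega))
            (by linarith)
      _ ≤ binomWeight m q (i + (k + 1)) :=
          one_sub_mul_binomWeight_le_succ hq hq1 hj (by exact_mod_cast hδj)

lemma binomWeight_le_two_mul_binomWeight_add (hq : 1 / 2 ≤ q) (hq1 : q < 1) {k i : ℕ}
    (hk : 16 * k ^ 2 ≤ m) (hci : m - m / 2 ≤ i) (hik : i < m - m / 2 + k) :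
    binomWeight m q i ≤ 2 * binomWeight m q (i + k) := by
  have h8k : 8 * k ≤ m := by have := Nat.le_self_pow two_ne_zero k; omega
  have hm : (0 : ℝ) < m := by exact_mod_cast (by omega : 0 < m)
  set δ : ℝ := 8 * k / m
  have hδ : δ ≤ 1 := by rw [div_le_one hm]; exact_mod_cast h8k
  have hkδ : k * δ ≤ 1 / 2 := by
    rw [mul_div_assoc', div_le_iff₀ hm]
    have : (16 * k ^ 2 : ℝ) ≤ m := by exact_mod_cast hk
    nlinarith
  have hbernoulli : 1 / 2 ≤ (1 - δ) ^ k := by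
    have := one_add_mul_le_pow (a := -δ) (by linarith) k
    rw [← sub_eq_add_neg] at this
    linarith
  have hpow := pow_mul_binomWeight_le_add (m := m) (i := i) hq hq1 hδ k fun j hij hjk => by
    refine ⟨by omega, ?_⟩
    have h1 : (2 * j + 1 : ℝ) ≤ m + 4 * k := by exact_mod_cast (by omega : 2 * j + 1 ≤ m + 4 * k)
    have h2 : (m : ℝ) ≤ 2 * (j + 1) := by exact_mod_cast (by omega : m ≤ 2 * (j + 1))
    have h3 : 4 * k ≤ δ * (j + 1) := by
      rw [div_mul_eq_mul_div, le_div_iff₀ hm]; nlinarith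
    nlinarith
  nlinarith [binomWeight_nonneg (m := m) (by linarith) hq1.le i]

lemma one_sixth_le_sum_binomWeight_Ico (hq : 1 / 2 ≤ q) (hq1 : q < 1) {k : ℕ}
    (hk : 16 * k ^ 2 ≤ m) : 1 / 6 ≤ ∑ i ∈ Ico (m - m / 2 + k) (m + 1), binomWeight m q i := by
  have hnonneg := binomWeight_nonneg (m := m) (by linarith) hq1.le
  have hhalf := half_le_sum_binomWeight_Ico hq hq1.le (m := m)
  set c := m - m / 2
  have h8k : 8 * k ≤ m := by have := Nat.le_self_pow two_ne_zero k; omega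
  have hstrip : ∑ i ∈ Ico c (c + k), binomWeight m q i
      ≤ 2 * ∑ i ∈ Ico (c + k) (m + 1), binomWeight m q i :=
    calc ∑ i ∈ Ico c (c + k), binomWeight m q i
        ≤ 2 * ∑ i ∈ Ico c (c + k), binomWeight m q (i + k) := by
          rw [mul_sum]
          exact sum_le_sum fun i hi => by
            rw [mem_Ico] at hi
            exact binomWeight_le_two_mul_binomWeight_add hq hq1 hk hi.1 hi.2
      _ = 2 * ∑ i ∈ Ico (c + k) (c + k + k), binomWeight m q i := by rw [sum_Ico_add']
      _ ≤ 2 * ∑ i ∈ Ico (c + k) (m + 1), binomWeight m q i := by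
          gcongr 2 * ?_
          exact sum_le_sum_of_subset_of_nonneg (Ico_subset_Ico le_rfl (by omega))
            fun i _ _ => hnonneg i
  rw [← sum_Ico_consecutive _ (by omega : c ≤ c + k) (by omega : c + k ≤ m + 1)] at hhalf
  linarith

lemma binomPr_gt_inter_max_gt {x : ℕ} (hmx : m ≤ 2 * x) :
    binomPr m q ({y | m - y < y} ∩ {y | x < max y (m - y)})
      = ∑ i ∈ Ico (x + 1) (m + 1), binomWeight m q i :=
  binomPr_eq_sum (fun i => by simp) fun i hi => by simp; omega

lemma binomPr_lt_inter_max_gt {x : ℕ} (hmx : m ≤ 2 * x) :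
    binomPr m q ({y | y < m - y} ∩ {y | x < max y (m - y)})
      = ∑ i ∈ Ico (x + 1) (m + 1), binomWeight m q (m - i) := by
  rw [binomPr_eq_sum (T := range (m - x)) (range_subset_range.2 (by omega))
    fun i hi => by simp; omega, sum_Ico_reflect _ _ le_rfl, Nat.sub_self,
    Nat.add_sub_add_right, Nat.Ico_zero_eq_range]

lemma binomPr_max_gt_eq_add {x : ℕ} (hmx : m ≤ 2 * x) :
    binomPr m q {y | x < max y (m - y)}
      = binomPr m q ({y | m - y < y} ∩ {y | x < max y (m - y)})
        + binomPr m q ({y | y < m - y} ∩ {y | x < max y (m - y)}) := by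
  rw [← binomPr_union (Set.disjoint_left.2 fun y => by simp; omega)]
  congr 1
  ext y; simp; omega

lemma mul_sum_le_sum_sub_sum_reflect (hq : 1 / 2 ≤ q) (hq1 : q ≤ 1) {a s : ℕ} (hma : m ≤ 2 * a)
    (has : a ≤ s) (hs : s ≤ m + 1) :
    (1 - ((1 - q) / q) ^ (2 * s - m)) * ∑ i ∈ Ico s (m + 1), binomWeight m q i
      ≤ ∑ i ∈ Ico a (m + 1), binomWeight m q i
        - ∑ i ∈ Ico a (m + 1), binomWeight m q (m - i) := by
  have hρ0 : 0 ≤ (1 - q) / q := div_nonneg (by linarith) (by linarith)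
  have hρ1 : (1 - q) / q ≤ 1 := by rw [div_le_one (by linarith)]; linarith
  rw [← sum_sub_distrib, ← sum_Ico_consecutive _ has hs, mul_sum]
  have hlow : 0 ≤ ∑ i ∈ Ico a s, (binomWeight m q i - binomWeight m q (m - i)) :=
    sum_nonneg fun i hi => by
      rw [mem_Ico] at hi
      linarith [binomWeight_sub_le hq hq1 (m := m) (i := i) (by omega) (by omega)]
  have hhigh : ∑ i ∈ Ico s (m + 1), (1 - ((1 - q) / q) ^ (2 * s - m)) * binomWeight m q i
      ≤ ∑ i ∈ Ico s (m + 1), (binomWeight m q i - binomWeight m q (m - i)) :=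
    sum_le_sum fun i hi => by
      rw [mem_Ico] at hi
      rw [binomWeight_sub_eq (by positivity) (by omega) (by omega)]
      have hpow : ((1 - q) / q) ^ (2 * i - m) ≤ ((1 - q) / q) ^ (2 * s - m) :=
        pow_le_pow_of_le_one hρ0 hρ1 (by omega)
      nlinarith [binomWeight_nonneg (m := m) (by linarith) hq1 i]
  linarith

lemma exists_sum_binomWeight_Ico_ge (hq : 1 / 2 ≤ q) (hq1 : q < 1) {a : ℕ} (hma : m < 2 * a)
    (ham : a ≤ m) :
    ∃ s, a ≤ s ∧ s ≤ m + 1 ∧ √(m : ℝ) ≤ 4 * (2 * s - m : ℕ) ∧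
      (∑ i ∈ Ico a (m + 1), binomWeight m q i) / 6 ≤ ∑ i ∈ Ico s (m + 1), binomWeight m q i := by
  have hnonneg := binomWeight_nonneg (m := m) (by linarith) hq1.le
  set k := Nat.sqrt m / 4
  have hk : 16 * k ^ 2 ≤ m := by
    have := Nat.sqrt_le' m
    have : 4 * k ≤ Nat.sqrt m := by omega
    nlinarith
  have hsqrt : √(m : ℝ) ≤ 4 * k + 4 := by
    have := Real.real_sqrt_lt_nat_sqrt_succ (a := m)
    have : (Nat.sqrt m : ℝ) + 1 ≤ 4 * k + 4 := by
      exact_mod_cast (by omega : Nat.sqrt m + 1 ≤ 4 * k + 4)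
    linarith
  refine ⟨max a (m - m / 2 + k), le_max_left _ _, ?_, ?_, ?_⟩
  · have := Nat.sqrt_le_self m
    omega
  · refine hsqrt.trans ?_
    exact_mod_cast (by omega : 4 * k + 4 ≤ 4 * (2 * max a (m - m / 2 + k) - m))
  · rcases le_total (m - m / 2 + k) a with h | h
    · rw [max_eq_left h]
      linarith [sum_nonneg fun i (_ : i ∈ Ico a (m + 1)) => hnonneg i]
    · rw [max_eq_right h]
      have hle_one : ∑ i ∈ Ico a (m + 1), binomWeight m q i ≤ 1 := by
        rw [← sum_binomWeight m q, range_eq_Ico]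
        exact sum_le_sum_of_subset_of_nonneg (Ico_subset_Ico_left (Nat.zero_le a))
          fun i _ _ => hnonneg i
      linarith [one_sixth_le_sum_binomWeight_Ico hq hq1 hk]

end

lemma one_sub_div_pow_le_inv {q : ℝ} (hq : 1 / 2 ≤ q) (hq1 : q ≤ 1) (t : ℕ) :
    ((1 - q) / q) ^ t ≤ (1 + t * (2 * q - 1))⁻¹ := by
  have hε : (0 : ℝ) ≤ 2 * q - 1 := by linarith
  have hρ : (1 - q) / q ≤ (1 + (2 * q - 1))⁻¹ := by
    rw [← one_div, div_le_div_iff₀ (by linarith) (by linarith)]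
    nlinarith
  calc ((1 - q) / q) ^ t ≤ ((1 + (2 * q - 1))⁻¹) ^ t :=
        pow_le_pow_left₀ (div_nonneg (sub_nonneg.2 hq1) (by linarith)) hρ t
    _ = ((1 + (2 * q - 1)) ^ t)⁻¹ := inv_pow _ _
    _ ≤ (1 + t * (2 * q - 1))⁻¹ :=
        inv_anti₀ (by have := mul_nonneg t.cast_nonneg hε; linarith)
          (one_add_mul_le_pow (by linarith) t)

lemma min_div_five_le_one_sub_inv {u v : ℝ} (hv : 0 ≤ v) (hvu : v ≤ 4 * u) :
    min v 1 / 5 ≤ 1 - (1 + u)⁻¹ := by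
  have hu : 0 < 1 + u := by linarith
  rw [inv_eq_one_div, one_sub_div hu.ne', add_sub_cancel_left, le_div_iff₀ hu]
  rcases le_total v 1 with h | h
  · rw [min_eq_left h]; nlinarith
  · rw [min_eq_right h]; linarith

/-- conditional on `max(Y1, Y2) > x` with `m/2 ≤ x < m`, the bias
between `Y1 ~ Binomial(m, q)` and `Y2 = m - Y1` is at least
`C1 · min(√m · (2q - 1), 1)` (note `m/2 ≤ x` iff `m ≤ 2 * x`). -/
theorem conditional_bias_reduction_to_two_opinions :
    ∃ C1 : ℝ, 0 < C1 ∧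
      ∀ (m : ℕ), 1 ≤ m → ∀ (q : ℝ), 1 / 2 < q → q < 1 →
        ∀ (x : ℕ), m ≤ 2 * x → x < m →
          C1 * min (Real.sqrt m * (2 * q - 1)) 1 ≤
            binomPr m q ({y | m - y < y} ∩ {y | x < max y (m - y)}) /
                binomPr m q {y | x < max y (m - y)} -
              binomPr m q ({y | y < m - y} ∩ {y | x < max y (m - y)}) /
                binomPr m q {y | x < max y (m - y)} := by
  refine ⟨1 / 60, by norm_num, fun m _ q hq hq1 x hmx hxm => ?_⟩
  have hw := binomWeight_nonneg (m := m) (by linarith) hq1.le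
  rw [binomPr_max_gt_eq_add hmx, binomPr_gt_inter_max_gt hmx, binomPr_lt_inter_max_gt hmx,
    div_sub_div_same]
  set P := ∑ i ∈ Ico (x + 1) (m + 1), binomWeight m q i
  set P' := ∑ i ∈ Ico (x + 1) (m + 1), binomWeight m q (m - i)
  have hP : q ^ m ≤ P := binomWeight_self m q ▸ single_le_sum (fun i _ => hw i) (by simp; omega)
  have hP' : 0 ≤ P' := sum_nonneg fun i _ => hw _
  have hP'P : P' ≤ P := sum_le_sum fun i hi =>
    binomWeight_sub_le hq.le hq1.le (by simp at hi; omega) (by simp at hi; omega)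
  obtain ⟨s, hxs, hsm, hsqrt, htail⟩ :=
    exists_sum_binomWeight_Ico_ge hq.le hq1 (by omega : m < 2 * (x + 1)) hxm
  set M := min (√(m : ℝ) * (2 * q - 1)) 1
  have hε : 0 ≤ √(m : ℝ) * (2 * q - 1) := mul_nonneg (Real.sqrt_nonneg _) (by linarith)
  have hM : 0 ≤ M := le_min hε zero_le_one
  have hgap : M / 5 ≤ 1 - ((1 - q) / q) ^ (2 * s - m) :=
    (min_div_five_le_one_sub_inv hε (by nlinarith)).trans
      (sub_le_sub_left (one_sub_div_pow_le_inv hq.le hq1.le _) 1)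
  rw [le_div_iff₀ (by linarith [pow_pos (by linarith : 0 < q) m])]
  calc 1 / 60 * M * (P + P') ≤ M / 5 * (P / 6) := by
        linarith [mul_le_mul_of_nonneg_left hP'P hM]
    _ ≤ (1 - ((1 - q) / q) ^ (2 * s - m)) * ∑ i ∈ Ico s (m + 1), binomWeight m q i :=
        mul_le_mul hgap htail (by linarith) (by linarith)
    _ ≤ P - P' := mul_sum_le_sum_sub_sum_reflect hq.le hq1.le (by omega) hxs hsm
end
end

section
/- There exists a natural number n0 such that for all integers n ≥ n0 with k ≤ n the following holds: if p_1 ≥ p_2 ≥ … ≥ p_k and h·p_1 > 324·log n, then Pr(W_{1,strict}) ≥ (1/6)·Pr(W_{1,ties}) and (1/6)·Pr(W_{1,ties}) ≥ (1/18)·p_1; in particular Pr(W_{1,strict}) ≥ p_1/18. -/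
/-!
Two estimates. First, exchanging the labels `i` and `j` maps the outcomes in which `j` beats `i`
into `Wties i`, multiplying their weight by at least `p i / p j`; summing over `j` gives
`p i (1 - Pr(Wties i)) ≤ (1 - p i) Pr(Wties i)`, i.e. `p i ≤ Pr(Wties i)` when `p i` is maximal.

Second, write `p = p i • δ_i + (1 - p i) • q` and condition on the set of samples equal to `i`:
both events become binomial mixtures `∑ b_m a_m` and `∑ b_m s_m`, where `a_m` (resp. `s_m`) is
the probability that `h - m` samples from `q` give no opinion `m + 1` (resp. `m`) votes.
Dropping one sample shows `a_m ≤ s_(m+1)`, and comparing `b_m` with `b_(m+1)` yields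
`Pr(Wties i) ≤ 5 Pr(Wstrict i) + 2 exp (-h p_i / 3)`; the hypothesis `h p_i > 324 log n`
makes the error term at most `p_i / 12`.
-/

open scoped BigOperators

noncomputable section

/-- The number of the `h` i.i.d. samples `ω` that are equal to opinion `i`. -/
def cnt {k h : ℕ} (ω : Fin h → Fin k) (i : Fin k) : ℕ :=
  (Finset.univ.filter fun j => ω j = i).card

/-- The probability of the event `A` under `h` i.i.d. samples drawn from the
probability vector `p` on `Fin k` (multinomial sampling). -/
def multiPr (k h : ℕ) (p : Fin k → ℝ) (A : Set (Fin h → Fin k)) : ℝ :=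
  ∑ ω : Fin h → Fin k, A.indicator (fun ω => ∏ j, p (ω j)) ω

/-- The maximal number of samples received by an opinion. -/
def maxCnt {k h : ℕ} (ω : Fin h → Fin k) : ℕ :=
  Finset.univ.sup (cnt ω)

/-- The number of opinions achieving the maximal number of samples. -/
def numMax {k h : ℕ} (ω : Fin h → Fin k) : ℕ :=
  (Finset.univ.filter fun i => cnt ω i = maxCnt ω).card

/-- The probability that opinion `i` wins the `h`-majority with uniform
tie-breaking, jointly with the event `A`:
`E[ 1_A · 1{X_i = max_l X_l} / #{l : X_l maximal} ]`. -/
def winPrOn (k h : ℕ) (p : Fin k → ℝ) (A : Set (Fin h → Fin k)) (i : Fin k) : ℝ :=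
  ∑ ω : Fin h → Fin k,
    (A ∩ {ω' | cnt ω' i = maxCnt ω'}).indicator
      (fun ω => (∏ j, p (ω j)) / (numMax ω : ℝ)) ω

/-- The probability that opinion `i` wins the `h`-majority with uniform tie-breaking. -/
def winPr (k h : ℕ) (p : Fin k → ℝ) (i : Fin k) : ℝ :=
  winPrOn k h p Set.univ i

/-- `W_{i,strict}`: opinion `i` is the unique most sampled opinion. -/
def Wstrict (k h : ℕ) (i : Fin k) : Set (Fin h → Fin k) :=
  {ω | ∀ j, j ≠ i → cnt ω j < cnt ω i}

/-- `W_{i,ties}`: opinion `i` is among the most sampled opinions. -/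
def Wties (k h : ℕ) (i : Fin k) : Set (Fin h → Fin k) :=
  {ω | ∀ j, j ≠ i → cnt ω j ≤ cnt ω i}

/-- `W_{1,2,strict}`: opinion `i₁` or opinion `i₂` is the unique most sampled opinion. -/
def W12strict (k h : ℕ) (i₁ i₂ : Fin k) : Set (Fin h → Fin k) :=
  Wstrict k h i₁ ∪ Wstrict k h i₂

/-- Opinion 1 (as an element of `Fin k`, assuming `2 ≤ k`). -/
def o₁ (k : ℕ) (hk : 2 ≤ k) : Fin k := ⟨0, by omega⟩

/-- Opinion 2 (as an element of `Fin k`, assuming `2 ≤ k`). -/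
def o₂ (k : ℕ) (hk : 2 ≤ k) : Fin k := ⟨1, by omega⟩

open Finset

variable {k h : ℕ}

section multiPr

variable {p : Fin k → ℝ}

lemma multiPr_eq_sum_mul_indicator (p : Fin k → ℝ) (A : Set (Fin h → Fin k)) :
    multiPr k h p A = ∑ ω, (∏ t, p (ω t)) * A.indicator 1 ω := by
  classical
  simp [multiPr, Set.indicator_apply]

lemma multiPr_nonneg (hp : ∀ j, 0 ≤ p j) (A : Set (Fin h → Fin k)) : 0 ≤ multiPr k h p A :=
  sum_nonneg fun ω _ => Set.indicator_nonneg (fun _ _ => prod_nonneg fun _ _ => hp _) ω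

lemma multiPr_mono (hp : ∀ j, 0 ≤ p j) {A B : Set (Fin h → Fin k)} (hAB : A ⊆ B) :
    multiPr k h p A ≤ multiPr k h p B :=
  sum_le_sum fun ω _ =>
    Set.indicator_le_indicator_of_subset hAB (fun _ => prod_nonneg fun _ _ => hp _) ω

lemma multiPr_univ (hp1 : ∑ j, p j = 1) : multiPr k h p Set.univ = 1 := by
  simp [multiPr, ← Fintype.sum_pow, hp1]

lemma multiPr_le_one (hp : ∀ j, 0 ≤ p j) (hp1 : ∑ j, p j = 1) (A : Set (Fin h → Fin k)) :
    multiPr k h p A ≤ 1 :=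
  (multiPr_mono hp (Set.subset_univ A)).trans_eq (multiPr_univ hp1)

lemma multiPr_compl (hp1 : ∑ j, p j = 1) (A : Set (Fin h → Fin k)) :
    multiPr k h p Aᶜ = 1 - multiPr k h p A := by
  rw [← multiPr_univ (h := h) hp1, eq_sub_iff_add_eq', multiPr, multiPr, multiPr,
    ← sum_add_distrib]
  exact sum_congr rfl fun ω _ => by
    rw [Set.indicator_self_add_compl_apply, Set.indicator_univ]

lemma multiPr_biUnion_le (hp : ∀ j, 0 ≤ p j) {ι : Type*} (s : Finset ι)
    (A : ι → Set (Fin h → Fin k)) :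
    multiPr k h p (⋃ j ∈ s, A j) ≤ ∑ j ∈ s, multiPr k h p (A j) := by
  simp only [multiPr]
  rw [sum_comm]
  refine sum_le_sum fun ω _ => ?_
  have hind : ∀ B : Set (Fin h → Fin k), 0 ≤ B.indicator (fun ω => ∏ t, p (ω t)) ω :=
    fun B => Set.indicator_nonneg (fun _ _ => prod_nonneg fun _ _ => hp _) ω
  by_cases hω : ω ∈ ⋃ j ∈ s, A j
  · obtain ⟨j, hj, hωj⟩ := Set.mem_iUnion₂.1 hω
    rw [Set.indicator_of_mem hω, ← Set.indicator_of_mem hωj (fun ω => ∏ t, p (ω t))]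
    exact single_le_sum (fun j _ => hind (A j)) hj
  · rw [Set.indicator_of_notMem hω]
    exact sum_nonneg fun j _ => hind (A j)

lemma multiPr_congr {A B : Set (Fin h → Fin k)}
    (hAB : ∀ ω, ∏ t, p (ω t) ≠ 0 → (ω ∈ A ↔ ω ∈ B)) :
    multiPr k h p A = multiPr k h p B := by
  classical
  refine sum_congr rfl fun ω _ => ?_
  by_cases hw : ∏ t, p (ω t) = 0
  · simp [Set.indicator_apply, hw]
  · simp [Set.indicator_apply, hAB ω hw]

end multiPr

lemma cnt_le (ω : Fin h → Fin k) (j : Fin k) : cnt ω j ≤ h :=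
  (card_le_univ _).trans_eq (Fintype.card_fin h)

lemma prod_eq_prod_pow_cnt (p : Fin k → ℝ) (ω : Fin h → Fin k) :
    ∏ t, p (ω t) = ∏ j, p j ^ cnt ω j := by
  rw [← prod_fiberwise' univ ω p]
  simp [cnt]

lemma cnt_perm_comp (σ : Equiv.Perm (Fin k)) (ω : Fin h → Fin k) (j : Fin k) :
    cnt (σ ∘ ω) j = cnt ω (σ.symm j) := by
  simp [cnt, ← Equiv.eq_symm_apply]

section swap

variable {p : Fin k → ℝ}

lemma mul_prod_le_mul_prod_swap (hp : ∀ j, 0 ≤ p j) {i j : Fin k} (hij : i ≠ j)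
    (hle : p j ≤ p i) {ω : Fin h → Fin k} (hcnt : cnt ω i < cnt ω j) :
    p i * ∏ t, p (ω t) ≤ p j * ∏ t, p (Equiv.swap i j (ω t)) := by
  have hsplit : ∀ f : Fin k → ℝ, ∏ l, f l = f i * f j * ∏ l ∈ {i, j}ᶜ, f l := fun f => by
    rw [← prod_pair hij, prod_mul_prod_compl]
  have hswap : ∏ t, p (Equiv.swap i j (ω t)) = ∏ l, p l ^ cnt ω (Equiv.swap i j l) := by
    simpa only [Function.comp_apply, cnt_perm_comp, Equiv.symm_swap] using
      prod_eq_prod_pow_cnt p (Equiv.swap i j ∘ ω)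
  have hrest : ∏ l ∈ {i, j}ᶜ, p l ^ cnt ω (Equiv.swap i j l) = ∏ l ∈ {i, j}ᶜ, p l ^ cnt ω l :=
    prod_congr rfl fun l hl => by
      simp only [mem_compl, mem_insert, mem_singleton, not_or] at hl
      rw [Equiv.swap_apply_of_ne_of_ne hl.1 hl.2]
  rw [hswap, prod_eq_prod_pow_cnt, hsplit, hsplit (fun l => p l ^ cnt ω (Equiv.swap i j l)),
    hrest, Equiv.swap_apply_left, Equiv.swap_apply_right]
  obtain ⟨d, hd⟩ := Nat.exists_eq_add_of_lt hcnt
  have hR : 0 ≤ ∏ l ∈ {i, j}ᶜ, p l ^ cnt ω l := prod_nonneg fun l _ => pow_nonneg (hp l) _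
  have hcommon : 0 ≤ (p i * p j) ^ (cnt ω i + 1) := pow_nonneg (mul_nonneg (hp i) (hp j)) _
  calc p i * (p i ^ cnt ω i * p j ^ cnt ω j * ∏ l ∈ {i, j}ᶜ, p l ^ cnt ω l)
      = (p i * p j) ^ (cnt ω i + 1) * p j ^ d * ∏ l ∈ {i, j}ᶜ, p l ^ cnt ω l := by
        rw [hd]; ring
    _ ≤ (p i * p j) ^ (cnt ω i + 1) * p i ^ d * ∏ l ∈ {i, j}ᶜ, p l ^ cnt ω l := by
        gcongr
        exact hp j
    _ = p j * (p i ^ cnt ω j * p j ^ cnt ω i * ∏ l ∈ {i, j}ᶜ, p l ^ cnt ω l) := by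
        rw [hd]; ring

lemma mul_multiPr_overtaken_le (hp : ∀ j, 0 ≤ p j) {i j : Fin k} (hij : i ≠ j)
    (hle : p j ≤ p i) :
    p i * multiPr k h p {ω | ω ∈ Wties k h j ∧ cnt ω i < cnt ω j} ≤
      p j * multiPr k h p (Wties k h i) := by
  classical
  set e : (Fin h → Fin k) ≃ (Fin h → Fin k) := Equiv.piCongrRight fun _ => Equiv.swap i j
  have hmaps : ∀ ω, ω ∈ Wties k h j → cnt ω i < cnt ω j → e ω ∈ Wties k h i := by
    intro ω hω hlt l hl
    have hcnt : ∀ l, cnt (e ω) l = cnt ω (Equiv.swap i j l) := fun l => by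
      rw [← Equiv.symm_swap, ← cnt_perm_comp]; rfl
    rw [hcnt, hcnt, Equiv.swap_apply_left]
    by_cases hlj : l = j
    · rw [hlj, Equiv.swap_apply_right]
      exact hlt.le
    · rw [Equiv.swap_apply_of_ne_of_ne hl hlj]
      exact hω l hlj
  simp only [multiPr, Set.indicator_apply, Set.mem_ofPred_eq, mul_sum]
  calc ∑ ω, p i * (if ω ∈ Wties k h j ∧ cnt ω i < cnt ω j then ∏ t, p (ω t) else 0)
      ≤ ∑ ω, p j * (if e ω ∈ Wties k h i then ∏ t, p (e ω t) else 0) := by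
        refine sum_le_sum fun ω _ => ?_
        split_ifs with hω hω'
        · exact mul_prod_le_mul_prod_swap hp hij hle hω.2
        · exact absurd (hmaps ω hω.1 hω.2) hω'
        · rw [mul_zero]
          exact mul_nonneg (hp j) (prod_nonneg fun _ _ => hp _)
        · simp
    _ = ∑ ω, p j * (if ω ∈ Wties k h i then ∏ t, p (ω t) else 0) :=
        e.sum_comp fun ω => p j * (if ω ∈ Wties k h i then ∏ t, p (ω t) else 0)

lemma compl_Wties_subset (i : Fin k) :
    (Wties k h i)ᶜ ⊆ ⋃ j ∈ univ.erase i, {ω | ω ∈ Wties k h j ∧ cnt ω i < cnt ω j} := by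
  intro ω hω
  obtain ⟨l, hli, hl⟩ : ∃ l, l ≠ i ∧ cnt ω i < cnt ω l := by
    simpa [Wties] using hω
  obtain ⟨j, -, hj⟩ := exists_max_image univ (cnt ω) ⟨i, mem_univ i⟩
  have hij : cnt ω i < cnt ω j := hl.trans_le (hj l (mem_univ l))
  refine Set.mem_iUnion₂.2 ⟨j, mem_erase.2 ⟨?_, mem_univ j⟩, fun l _ => hj l (mem_univ l), hij⟩
  rintro rfl
  exact lt_irrefl _ hij

theorem le_multiPr_Wties (hp : ∀ j, 0 ≤ p j) (hp1 : ∑ j, p j = 1) {i : Fin k}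
    (hmax : ∀ j, p j ≤ p i) : p i ≤ multiPr k h p (Wties k h i) := by
  have hloss : p i * (1 - multiPr k h p (Wties k h i)) ≤
      (1 - p i) * multiPr k h p (Wties k h i) :=
    calc p i * (1 - multiPr k h p (Wties k h i)) = p i * multiPr k h p (Wties k h i)ᶜ := by
          rw [multiPr_compl hp1]
      _ ≤ p i * ∑ j ∈ univ.erase i, multiPr k h p {ω | ω ∈ Wties k h j ∧ cnt ω i < cnt ω j} :=
          mul_le_mul_of_nonneg_left
            ((multiPr_mono hp (compl_Wties_subset i)).trans (multiPr_biUnion_le hp _ _)) (hp i)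
      _ ≤ ∑ j ∈ univ.erase i, p j * multiPr k h p (Wties k h i) := by
          rw [mul_sum]
          exact sum_le_sum fun j hj =>
            mul_multiPr_overtaken_le hp (ne_of_mem_erase hj).symm (hmax j)
      _ = (1 - p i) * multiPr k h p (Wties k h i) := by
          rw [← sum_mul, sum_erase_eq_sub (mem_univ i), hp1]
  linarith

lemma pow_le_multiPr_Wstrict (hp : ∀ j, 0 ≤ p j) (hh : 1 ≤ h) (i : Fin k) :
    p i ^ h ≤ multiPr k h p (Wstrict k h i) := by
  have hconst : (fun _ => i) ∈ Wstrict k h i := fun j hj => by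
    simp [cnt, hj.symm]
    omega
  calc p i ^ h = (Wstrict k h i).indicator (fun ω => ∏ t, p (ω t)) fun _ => i := by
        simp [Set.indicator_of_mem hconst]
    _ ≤ multiPr k h p (Wstrict k h i) :=
        single_le_sum (f := fun ω => (Wstrict k h i).indicator (fun ω => ∏ t, p (ω t)) ω)
          (fun ω _ => Set.indicator_nonneg (fun _ _ => prod_nonneg fun _ _ => hp _) ω)
          (mem_univ _)

end swap

section conditioning

variable (i : Fin k)

lemma card_compl_eq (S : Finset (Fin h)) : #Sᶜ = h - #S := by
  rw [card_compl, Fintype.card_fin]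

/-- The enumeration of `Sᶜ` is arbitrary: only the counts of the result matter
(`cnt_fillOutside`). -/
def fillOutside (S : Finset (Fin h)) (u : Fin (h - #S) → Fin k) : Fin h → Fin k :=
  fun t => if ht : t ∈ Sᶜ then u (Sᶜ.equivFinOfCardEq (card_compl_eq S) ⟨t, ht⟩) else i

def othersBelow {L : ℕ} (c : ℕ) : Set (Fin L → Fin k) :=
  {u | ∀ j, j ≠ i → cnt u j < c}

lemma cnt_fillOutside (S : Finset (Fin h)) (u : Fin (h - #S) → Fin k) (j : Fin k) :
    cnt (fillOutside i S u) j = (if i = j then #S else 0) + cnt u j := by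
  set e := Sᶜ.equivFinOfCardEq (card_compl_eq S)
  have hS : ∑ t ∈ S, (if fillOutside i S u t = j then 1 else 0) = if i = j then #S else 0 := by
    have hi : ∀ t ∈ S, fillOutside i S u t = i := fun t ht => dif_neg (notMem_compl.2 ht)
    calc ∑ t ∈ S, (if fillOutside i S u t = j then 1 else 0)
        = ∑ t ∈ S, if i = j then 1 else 0 := sum_congr rfl fun t ht => by rw [hi t ht]
      _ = if i = j then #S else 0 := by split_ifs <;> simp
  have hSc : ∑ t ∈ Sᶜ, (if fillOutside i S u t = j then 1 else 0) = cnt u j := by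
    rw [← sum_coe_sort, cnt, card_eq_sum_ones, sum_filter,
      ← e.sum_comp fun r => if u r = j then 1 else 0]
    refine sum_congr rfl fun t _ => ?_
    rw [fillOutside, dif_pos t.2]
  rw [cnt, card_eq_sum_ones, sum_filter, ← sum_add_sum_compl S, hS, hSc]

lemma sum_prod_mul_eq_sum_fillOutside (q : Fin k → ℝ) (S : Finset (Fin h))
    (G : (Fin h → Fin k) → ℝ) :
    ∑ ω, ((∏ t ∈ S, if ω t = i then 1 else 0) * ∏ t ∈ Sᶜ, q (ω t)) * G ω =
      ∑ u : Fin (h - #S) → Fin k, (∏ r, q (u r)) * G (fillOutside i S u) := by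
  set e := Sᶜ.equivFinOfCardEq (card_compl_eq S)
  simp only [prod_boole, ite_mul, one_mul, zero_mul]
  rw [← sum_filter]
  refine sum_nbij' (fun ω r => ω (e.symm r)) (fillOutside i S) (fun _ _ => mem_univ _)
    (fun u _ => mem_filter.2 ⟨mem_univ _, fun t ht => ?_⟩) (fun ω hω => ?_) (fun u _ => ?_)
    (fun ω hω => ?_)
  · rw [fillOutside, dif_neg (notMem_compl.2 ht)]
  · funext t
    by_cases ht : t ∈ Sᶜ
    · rw [fillOutside, dif_pos ht, Equiv.symm_apply_apply]
    · rw [fillOutside, dif_neg ht]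
      exact ((mem_filter.1 hω).2 t (notMem_compl.1 ht)).symm
  · funext r
    rw [fillOutside, dif_pos (e.symm r).2]
    exact congrArg u (e.apply_symm_apply r)
  · have hfill : fillOutside i S (fun r => ω (e.symm r)) = ω := by
      funext t
      by_cases ht : t ∈ Sᶜ
      · rw [fillOutside, dif_pos ht, Equiv.symm_apply_apply]
      · rw [fillOutside, dif_neg ht]
        exact ((mem_filter.1 hω).2 t (notMem_compl.1 ht)).symm
    rw [hfill, ← prod_coe_sort, ← e.symm.prod_comp]

lemma sum_prod_mul_eq_sum_powerset (p q : Fin k → ℝ)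
    (hpq : ∀ j, p j = p i * (if j = i then 1 else 0) + (1 - p i) * q j)
    (G : (Fin h → Fin k) → ℝ) :
    ∑ ω, (∏ t, p (ω t)) * G ω = ∑ S ∈ univ.powerset, p i ^ #S * (1 - p i) ^ (h - #S) *
        ∑ u : Fin (h - #S) → Fin k, (∏ r, q (u r)) * G (fillOutside i S u) := by
  simp_rw [← sum_prod_mul_eq_sum_fillOutside i q, mul_sum]
  rw [sum_comm]
  refine sum_congr rfl fun ω _ => ?_
  rw [prod_congr rfl fun t _ => hpq (ω t), prod_add, sum_mul]
  refine sum_congr rfl fun S _ => ?_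
  rw [← compl_eq_univ_sdiff, prod_mul_distrib, prod_mul_distrib, prod_const, prod_const,
    card_compl_eq]
  ring

end conditioning

section condNe
variable {p : Fin k → ℝ} {i : Fin k}

variable (p i) in
/-- The law of a sample from `p` conditioned on differing from `i`. -/
def condNe : Fin k → ℝ := fun j => if j = i then 0 else p j / (1 - p i)

lemma condNe_nonneg (hp : ∀ j, 0 ≤ p j) (hi : p i < 1) (j : Fin k) : 0 ≤ condNe p i j := by
  unfold condNe
  split_ifs
  · exact le_rfl
  · exact div_nonneg (hp j) (by linarith)

lemma sum_condNe (hp1 : ∑ j, p j = 1) (hi : p i < 1) : ∑ j, condNe p i j = 1 := by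
  simp only [condNe]
  rw [sum_ite, filter_eq', filter_ne', if_pos (mem_univ i), sum_const_zero, zero_add,
    ← sum_div, sum_erase_eq_sub (mem_univ i), hp1, div_self (by linarith)]

lemma eq_add_condNe (hi : p i < 1) (j : Fin k) :
    p j = p i * (if j = i then 1 else 0) + (1 - p i) * condNe p i j := by
  unfold condNe
  split_ifs with hj
  · rw [hj]; ring
  · field_simp [show 1 - p i ≠ 0 by linarith]
    ring

lemma cnt_eq_zero_of_prod_ne_zero {L : ℕ} {q : Fin k → ℝ} (hq : q i = 0) {u : Fin L → Fin k}
    (hu : ∏ r, q (u r) ≠ 0) : cnt u i = 0 := by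
  refine card_eq_zero.2 (filter_eq_empty_iff.2 fun r _ hr => hu ?_)
  exact prod_eq_zero (mem_univ r) (hr ▸ hq)

end condNe

def binomialWeight (h : ℕ) (x : ℝ) (m : ℕ) : ℝ :=
  h.choose m * x ^ m * (1 - x) ^ (h - m)

/-- Conditionally on the set `S` of samples equal to `i`, the other samples are i.i.d. with law
`condNe p i`. -/
theorem multiPr_eq_sum_binomialWeight {p : Fin k → ℝ} {i : Fin k} (hi : p i < 1)
    (A : Set (Fin h → Fin k)) (c : ℕ → ℕ)
    (hA : ∀ S u, cnt u i = 0 → (fillOutside i S u ∈ A ↔ ∀ j, j ≠ i → cnt u j < c #S)) :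
    multiPr k h p A = ∑ m ∈ range (h + 1),
      binomialWeight h (p i) m * multiPr k (h - m) (condNe p i) (othersBelow i (c m)) := by
  have hcond : ∀ S : Finset (Fin h),
      ∑ u : Fin (h - #S) → Fin k, (∏ r, condNe p i (u r)) * A.indicator 1 (fillOutside i S u) =
        multiPr k (h - #S) (condNe p i) (othersBelow i (c #S)) := by
    intro S
    classical
    rw [multiPr_congr (B := fillOutside i S ⁻¹' A), multiPr_eq_sum_mul_indicator]
    · simp [Set.indicator_apply]
    · intro u hu
      exact (hA S u (cnt_eq_zero_of_prod_ne_zero (by simp [condNe]) hu)).symm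
  rw [multiPr_eq_sum_mul_indicator, sum_prod_mul_eq_sum_powerset i p (condNe p i)
    (eq_add_condNe hi)]
  simp_rw [hcond]
  rw [sum_powerset_apply_card
    (fun m => p i ^ m * (1 - p i) ^ (h - m) * multiPr k (h - m) (condNe p i) (othersBelow i (c m))),
    card_univ, Fintype.card_fin]
  refine sum_congr rfl fun m _ => ?_
  rw [nsmul_eq_mul, binomialWeight]
  ring

lemma cnt_le_cnt_cons {L : ℕ} (a : Fin k) (u : Fin L → Fin k) (j : Fin k) :
    cnt u j ≤ cnt (Fin.cons a u : Fin (L + 1) → Fin k) j :=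
  card_le_card_of_injOn Fin.succ (fun r hr => by simpa [cnt] using hr) (Fin.succ_injective L).injOn

lemma multiPr_othersBelow_succ_le {q : Fin k → ℝ} (hq : ∀ j, 0 ≤ q j) (hq1 : ∑ j, q j = 1)
    (i : Fin k) (L c : ℕ) :
    multiPr k (L + 1) q (othersBelow i c) ≤ multiPr k L q (othersBelow i c) := by
  classical
  rw [multiPr, ← (Fin.consEquiv fun _ => Fin k).sum_comp, Fintype.sum_prod_type]
  calc ∑ a, ∑ u, (othersBelow i c).indicator (fun ω => ∏ t, q (ω t)) (Fin.cons a u)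
      ≤ ∑ a, ∑ u, q a * (othersBelow i c).indicator (fun ω => ∏ t, q (ω t)) u := by
        refine sum_le_sum fun a _ => sum_le_sum fun u _ => ?_
        simp only [Set.indicator_apply, othersBelow, Set.mem_ofPred_eq, mul_ite, mul_zero]
        split_ifs with h1 h2
        · simp [Fin.prod_univ_succ]
        · exact absurd (fun j hj => (cnt_le_cnt_cons a u j).trans_lt (h1 j hj)) h2
        · exact mul_nonneg (hq a) (prod_nonneg fun _ _ => hq _)
        · exact le_rfl
    _ = multiPr k L q (othersBelow i c) := by
        rw [← sum_mul_sum]; simp [hq1, multiPr]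

lemma multiPr_othersBelow_eq_one {q : Fin k → ℝ} (hq1 : ∑ j, q j = 1) (i : Fin k) {L c : ℕ}
    (hL : L < c) : multiPr k L q (othersBelow i c) = 1 := by
  rw [show othersBelow i c = Set.univ from
    Set.eq_univ_of_forall fun u j _ => (cnt_le u j).trans_lt hL, multiPr_univ hq1]

section binomial
variable {h : ℕ} {x : ℝ}

lemma binomialWeight_nonneg (hx0 : 0 ≤ x) (hx1 : x ≤ 1) (m : ℕ) : 0 ≤ binomialWeight h x m := by
  have : 0 ≤ 1 - x := by linarith
  unfold binomialWeight
  positivity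

lemma binomialWeight_of_lt {m : ℕ} (hm : h < m) : binomialWeight h x m = 0 := by
  simp [binomialWeight, Nat.choose_eq_zero_of_lt hm]

lemma succ_mul_binomialWeight_succ {m : ℕ} (hm : m < h) :
    (m + 1) * (1 - x) * binomialWeight h x (m + 1) = (h - m) * x * binomialWeight h x m := by
  have hchoose : (h.choose (m + 1) : ℝ) * (m + 1) = h.choose m * (h - m) := by
    have := congrArg (Nat.cast : ℕ → ℝ) (Nat.choose_succ_right_eq h m)
    push_cast [Nat.cast_sub hm.le] at this
    exact this
  obtain ⟨d, rfl⟩ : ∃ d, h = m + 1 + d := ⟨h - (m + 1), by omega⟩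
  rw [binomialWeight, binomialWeight, show m + 1 + d - m = d + 1 by omega,
    show m + 1 + d - (m + 1) = d by omega]
  linear_combination (x ^ (m + 1) * (1 - x) ^ (d + 1)) * hchoose

lemma binomialWeight_le_mul_succ (hx0 : 0 ≤ x) (hx1 : x ≤ 1) {c : ℝ} {m : ℕ} (hm : m < h)
    (hratio : (m + 1) * (1 - x) ≤ c * ((h - m) * x)) :
    binomialWeight h x m ≤ c * binomialWeight h x (m + 1) := by
  have hhm : (0 : ℝ) < h - m := by
    have : (m : ℝ) < h := by exact_mod_cast hm
    linarith
  have hx : 0 < x := by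
    rcases hx0.eq_or_lt with rfl | hx
    · linarith [m.cast_nonneg (α := ℝ)]
    · exact hx
  have hpos : 0 < (h - m) * x := mul_pos hhm hx
  refine le_of_mul_le_mul_left ?_ hpos
  calc (h - m) * x * binomialWeight h x m = (m + 1) * (1 - x) * binomialWeight h x (m + 1) :=
        (succ_mul_binomialWeight_succ hm).symm
    _ ≤ c * ((h - m) * x) * binomialWeight h x (m + 1) := by
        gcongr
        exact binomialWeight_nonneg hx0 hx1 _
    _ = (h - m) * x * (c * binomialWeight h x (m + 1)) := by ring

lemma sum_binomialWeight_mul_two_pow :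
    ∑ m ∈ range (h + 1), binomialWeight h x m * 2 ^ m = (1 + x) ^ h := by
  rw [show 1 + x = 2 * x + (1 - x) by ring, add_pow]
  refine sum_congr rfl fun m _ => ?_
  rw [binomialWeight, mul_pow]
  ring

/-- A Chernoff bound at twice the mean `h x`: by Markov's inequality for `2 ^ (X + 1)`, the tail
is at most `2 (1 + x) ^ h / 4 ^ (h x) ≤ 2 exp ((1 - 2 log 2) h x)`, and `2 log 2 - 1 > 1 / 3`. -/
lemma sum_binomialWeight_upper_tail_le (hx0 : 0 ≤ x) (hx1 : x ≤ 1) :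
    ∑ m ∈ range (h + 1) with 2 * (h * x) < ((m : ℕ) : ℝ) + 1, binomialWeight h x m ≤
      2 * Real.exp (-(h * x) / 3) := by
  set μ : ℝ := h * x
  set E := Real.exp (2 * μ * Real.log 2)
  have hE : 0 < E := Real.exp_pos _
  have hb := binomialWeight_nonneg hx0 hx1 (h := h)
  have hterm : ∀ m : ℕ, 2 * μ < ↑m + 1 →
      binomialWeight h x m ≤ binomialWeight h x m * 2 ^ (m + 1) / E := by
    intro m hm
    rw [le_div_iff₀ hE]
    refine mul_le_mul_of_nonneg_left ?_ (hb m)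
    rw [← Real.exp_log (two_pos : (0 : ℝ) < 2), ← Real.exp_nat_mul]
    exact Real.exp_le_exp.2 (by push_cast; nlinarith [Real.log_pos one_lt_two])
  have hmu : μ - 2 * μ * Real.log 2 ≤ -μ / 3 := by
    have : 0 ≤ μ := by positivity
    nlinarith [Real.log_two_gt_d9]
  calc ∑ m ∈ range (h + 1) with 2 * μ < ((m : ℕ) : ℝ) + 1, binomialWeight h x m
      ≤ ∑ m ∈ range (h + 1) with 2 * μ < ((m : ℕ) : ℝ) + 1,
          binomialWeight h x m * 2 ^ (m + 1) / E :=
        sum_le_sum fun m hm => hterm m (mem_filter.1 hm).2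
    _ ≤ ∑ m ∈ range (h + 1), binomialWeight h x m * 2 ^ (m + 1) / E :=
        sum_le_sum_of_subset_of_nonneg (filter_subset _ _) fun m _ _ => by
          have := hb m; positivity
    _ = 2 * (1 + x) ^ h / E := by
        simp_rw [← sum_div, pow_succ, ← mul_assoc, ← sum_mul, sum_binomialWeight_mul_two_pow]
        ring
    _ ≤ 2 * Real.exp μ / E := by
        gcongr
        calc (1 + x) ^ h ≤ Real.exp x ^ h := by
              gcongr
              linarith [Real.add_one_le_exp x]
          _ = Real.exp μ := by rw [← Real.exp_nat_mul]
    _ = 2 * Real.exp (μ - 2 * μ * Real.log 2) := by rw [Real.exp_sub]; ring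
    _ ≤ 2 * Real.exp (-μ / 3) := by gcongr

/-- Level `m` is charged to level `m + 1` when `m + 1 ≤ 2 h x` and `2 m ≤ h` (then
`b_m ≤ 4 b_(m+1)`), to itself when `2 m > h` (then `s_m = 1`), and otherwise to the upper tail. -/
theorem sum_binomialWeight_mul_le (hx0 : 0 ≤ x) (hx1 : x ≤ 1) {a s : ℕ → ℝ}
    (ha0 : ∀ m, 0 ≤ a m) (ha1 : ∀ m, a m ≤ 1) (hs0 : ∀ m, 0 ≤ s m)
    (has : ∀ m, a m ≤ s (m + 1)) (hs1 : ∀ m, h < 2 * m → s m = 1) :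
    ∑ m ∈ range (h + 1), binomialWeight h x m * a m ≤
      5 * ∑ m ∈ range (h + 1), binomialWeight h x m * s m + 2 * Real.exp (-(h * x) / 3) := by
  set b := binomialWeight h x
  have hb := binomialWeight_nonneg hx0 hx1 (h := h)
  have hterm : ∀ m, b m * a m ≤
      b m * s m + 4 * (b (m + 1) * s (m + 1)) + (if 2 * (h * x) < ↑m + 1 then b m else 0) := by
    intro m
    have hbs := mul_nonneg (hb m) (hs0 m)
    have hbs' := mul_nonneg (hb (m + 1)) (hs0 (m + 1))
    have hba := mul_le_mul_of_nonneg_left (ha1 m) (hb m)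
    split_ifs with htail
    · linarith
    by_cases hbig : h < 2 * m
    · rw [hs1 m hbig]
      linarith
    push Not at htail hbig
    have hm : m < h := by
      have : ((m + 1 : ℕ) : ℝ) ≤ ((2 * h : ℕ) : ℝ) := by push_cast; nlinarith
      have : m + 1 ≤ 2 * h := by exact_mod_cast this
      omega
    have hratio : (m + 1) * (1 - x) ≤ 4 * ((h - m) * x) := by
      have : (2 * m : ℝ) ≤ h := by exact_mod_cast hbig
      nlinarith
    have h4 := mul_le_mul_of_nonneg_right (binomialWeight_le_mul_succ hx0 hx1 hm hratio) (ha0 m)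
    have has' := mul_le_mul_of_nonneg_left (has m) (hb (m + 1))
    linarith
  have hshift : ∑ m ∈ range (h + 1), b (m + 1) * s (m + 1) ≤ ∑ m ∈ range (h + 1), b m * s m := by
    have hlast : b (h + 1) = 0 := binomialWeight_of_lt (Nat.lt_succ_self h)
    rw [sum_range_succ, sum_range_succ' (fun m => b m * s m), hlast, zero_mul, add_zero]
    linarith [mul_nonneg (hb 0) (hs0 0)]
  calc ∑ m ∈ range (h + 1), b m * a m
      ≤ ∑ m ∈ range (h + 1), (b m * s m + 4 * (b (m + 1) * s (m + 1)) +
          (if 2 * (h * x) < ↑m + 1 then b m else 0)) := sum_le_sum fun m _ => hterm m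
    _ = ∑ m ∈ range (h + 1), b m * s m + 4 * ∑ m ∈ range (h + 1), b (m + 1) * s (m + 1) +
          ∑ m ∈ range (h + 1) with 2 * (h * x) < ((m : ℕ) : ℝ) + 1, b m := by
        rw [sum_add_distrib, sum_add_distrib, mul_sum, sum_filter]
    _ ≤ 5 * ∑ m ∈ range (h + 1), b m * s m + 2 * Real.exp (-(h * x) / 3) := by
        linarith [sum_binomialWeight_upper_tail_le hx0 hx1 (h := h)]

lemma two_mul_exp_neg_le {n h : ℕ} {x : ℝ} (hn : 2 ≤ n) (hxn : 1 ≤ n * x)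
    (hlog : 324 * Real.log n < h * x) : 2 * Real.exp (-(h * x) / 3) ≤ x / 12 := by
  have hn' : (2 : ℝ) ≤ n := by exact_mod_cast hn
  have hpow : 24 * (n : ℝ) ≤ n ^ 108 := by
    calc 24 * (n : ℝ) ≤ 2 ^ 107 * n := by gcongr; norm_num
      _ ≤ n ^ 107 * n := by gcongr
      _ = n ^ 108 := by ring
  have hexp : (n : ℝ) ^ 108 ≤ Real.exp (h * x / 3) := by
    rw [← Real.exp_log (by linarith : (0 : ℝ) < n), ← Real.exp_nat_mul]
    exact Real.exp_le_exp.2 (by push_cast; linarith)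
  have hinv : Real.exp (-(h * x) / 3) * Real.exp (h * x / 3) = 1 := by
    rw [← Real.exp_add]; simp [neg_div]
  nlinarith [Real.exp_pos (-(h * x) / 3)]

end binomial

section ties
variable {p : Fin k → ℝ} {i : Fin k}

lemma cnt_fillOutside_self {S : Finset (Fin h)} {u : Fin (h - #S) → Fin k} (hu : cnt u i = 0) :
    cnt (fillOutside i S u) i = #S := by
  rw [cnt_fillOutside, if_pos rfl, hu, add_zero]

lemma cnt_fillOutside_of_ne (S : Finset (Fin h)) (u : Fin (h - #S) → Fin k) {j : Fin k}
    (hj : j ≠ i) : cnt (fillOutside i S u) j = cnt u j := by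
  rw [cnt_fillOutside, if_neg hj.symm, zero_add]

lemma fillOutside_mem_Wties_iff {S : Finset (Fin h)} {u : Fin (h - #S) → Fin k}
    (hu : cnt u i = 0) : fillOutside i S u ∈ Wties k h i ↔ ∀ j, j ≠ i → cnt u j < #S + 1 := by
  simp only [Wties, Set.mem_ofPred_eq, cnt_fillOutside_self hu]
  exact forall₂_congr fun j hj => by rw [cnt_fillOutside_of_ne S u hj, Nat.lt_succ_iff]

lemma fillOutside_mem_Wstrict_iff {S : Finset (Fin h)} {u : Fin (h - #S) → Fin k}
    (hu : cnt u i = 0) : fillOutside i S u ∈ Wstrict k h i ↔ ∀ j, j ≠ i → cnt u j < #S := by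
  simp only [Wstrict, Set.mem_ofPred_eq, cnt_fillOutside_self hu]
  exact forall₂_congr fun j hj => by rw [cnt_fillOutside_of_ne S u hj]

theorem multiPr_Wties_le (hp : ∀ j, 0 ≤ p j) (hp1 : ∑ j, p j = 1) (hi : p i < 1) :
    multiPr k h p (Wties k h i) ≤
      5 * multiPr k h p (Wstrict k h i) + 2 * Real.exp (-(h * p i) / 3) := by
  have hq := condNe_nonneg hp hi
  have hq1 := sum_condNe hp1 hi
  rw [multiPr_eq_sum_binomialWeight hi _ (· + 1) fun _ _ => fillOutside_mem_Wties_iff,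
    multiPr_eq_sum_binomialWeight hi _ id fun _ _ => fillOutside_mem_Wstrict_iff]
  simp only [id_eq]
  refine sum_binomialWeight_mul_le (hp i) hi.le (fun m => multiPr_nonneg hq _)
    (fun m => multiPr_le_one hq hq1 _) (fun m => multiPr_nonneg hq _) (fun m => ?_)
    (fun m hm => multiPr_othersBelow_eq_one hq1 i (by omega))
  rcases lt_or_ge m h with hm | hm
  · rw [show h - m = h - (m + 1) + 1 by omega]
    exact multiPr_othersBelow_succ_le hq hq1 i _ _
  · rw [multiPr_othersBelow_eq_one hq1 i (by omega : h - (m + 1) < m + 1)]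
    exact multiPr_le_one hq hq1 _

theorem multiPr_Wties_le_of_log_lt {n : ℕ} (hn : 2 ≤ n) (hp : ∀ j, 0 ≤ p j)
    (hp1 : ∑ j, p j = 1) (hpn : 1 ≤ n * p i) (hlog : 324 * Real.log n < h * p i) :
    multiPr k h p (Wties k h i) ≤ 5 * multiPr k h p (Wstrict k h i) + p i / 12 := by
  rcases lt_or_ge (p i) 1 with hi | hi
  · linarith [multiPr_Wties_le (h := h) hp hp1 hi, two_mul_exp_neg_le hn hpn hlog]
  · have hpi : p i = 1 := le_antisymm (hp1 ▸ single_le_sum (fun j _ => hp j) (mem_univ i)) hi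
    have hh : 1 ≤ h := by
      have : 0 < Real.log n := Real.log_pos (by exact_mod_cast hn)
      have : (0 : ℝ) < h := by nlinarith
      exact_mod_cast this
    have hS := pow_le_multiPr_Wstrict hp hh i
    rw [hpi, one_pow] at hS
    linarith [multiPr_le_one hp hp1 (Wties k h i), hp i]

end ties

/-- if `p_1 ≥ p_2 ≥ … ≥ p_k`, `k ≤ n` and `h·p_1 > 324·log n`, then
`Pr(W_{1,strict}) ≥ (1/6)·Pr(W_{1,ties})`, `(1/6)·Pr(W_{1,ties}) ≥ (1/18)·p_1`,
and in particular `Pr(W_{1,strict}) ≥ p_1/18` (for `n` large enough). -/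
theorem ties_do_not_matter :
    ∃ n0 : ℕ, ∀ (n k h : ℕ), n0 ≤ n → ∀ (hk : 2 ≤ k), 1 ≤ h → k ≤ n →
      ∀ p : Fin k → ℝ, (∀ i, 0 ≤ p i) → ∑ i, p i = 1 →
        (∀ i j : Fin k, i ≤ j → p j ≤ p i) →
        324 * Real.log n < (h : ℝ) * p (o₁ k hk) →
        (1 / 6) * multiPr k h p (Wties k h (o₁ k hk)) ≤
            multiPr k h p (Wstrict k h (o₁ k hk)) ∧
          (1 / 18) * p (o₁ k hk) ≤ (1 / 6) * multiPr k h p (Wties k h (o₁ k hk)) ∧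
          p (o₁ k hk) / 18 ≤ multiPr k h p (Wstrict k h (o₁ k hk)) := by
  refine ⟨2, fun n k h hn hk _ hkn p hp hp1 hmono hlog => ?_⟩
  have hmax : ∀ j, p j ≤ p (o₁ k hk) := fun j => hmono _ j (Nat.zero_le _)
  have hpn : 1 ≤ n * p (o₁ k hk) :=
    calc 1 = ∑ j, p j := hp1.symm
      _ ≤ ∑ _j : Fin k, p (o₁ k hk) := sum_le_sum fun j _ => hmax j
      _ = k * p (o₁ k hk) := by simp
      _ ≤ n * p (o₁ k hk) := by gcongr; exact hp _
  have hties := le_multiPr_Wties (h := h) hp hp1 hmax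
  have hstrict := multiPr_Wties_le_of_log_lt hn hp hp1 hpn hlog
  have hp0 := hp (o₁ k hk)
  exact ⟨by linarith, by linarith, by linarith⟩
end
end
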